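/- arXiv:1901.11320 — 7 statements merged into one kernel-verified Lean document; each statement's English description precedes it below -/
import Mathlib

section
/- Let p be an odd prime, n an odd positive integer, and z a nonzero element of F_{p^n}. Then the number of quadratic residues of F_{p^n} lying in the kernel of the map x ↦ Tr(zx) (trace to F_p) equals (p^{n-1} + 1)/2. -/
/-!
The kernel `S` of `x ↦ Tr(z x)` is an `𝔽_p`-hyperplane, so `#S = p ^ (n - 1)`. Take `c ∈ 𝔽_p` a
nonsquare; since `[F : 𝔽_p] = n` is odd, `c` stays a nonsquare in `F` (its norm `c ^ n` would
otherwise be a square). Multiplication by `c` preserves `S` and swaps the nonzero squares with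
the nonsquares, so `S` consists of `0`, `k` nonzero squares and `k` nonsquares, and the number of
squares in `S` is `k + 1 = (p ^ (n - 1) + 1) / 2`.
-/

open Finset Function

theorem IsSquare.of_algebraMap {K L : Type*} [Field K] [Field L] [Algebra K L]
    [FiniteDimensional K L] (hd : Odd (Module.finrank K L)) {c : K}
    (h : IsSquare (algebraMap K L c)) : IsSquare c := by
  obtain ⟨m, hm⟩ := hd
  obtain ⟨y, hy⟩ := h
  rcases eq_or_ne c 0 with rfl | hc
  · exact IsSquare.zero
  have hnorm : c ^ (2 * m + 1) = Algebra.norm K y ^ 2 := by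
    rw [← hm, ← Algebra.norm_algebraMap, hy, map_mul, pow_two]
  refine ⟨Algebra.norm K y / c ^ m, ?_⟩
  field_simp
  rw [← hnorm]
  ring

theorem FiniteField.isSquare_mul_iff_not_isSquare {F : Type*} [Field F] [Fintype F] {c x : F}
    (hc : ¬IsSquare c) (hx : x ≠ 0) : IsSquare (c * x) ↔ ¬IsSquare x := by
  classical
  have hc0 : c ≠ 0 := by rintro rfl; exact hc IsSquare.zero
  rw [← quadraticChar_neg_one_iff_not_isSquare] at hc ⊢
  rw [← quadraticChar_one_iff_isSquare (mul_ne_zero hc0 hx), map_mul, hc]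
  constructor <;> intro h <;> linarith

theorem FiniteField.two_mul_card_filter_isSquare {F : Type*} [Field F] [Fintype F]
    [DecidableEq F] {c : F} (hc : ¬IsSquare c) {S : Finset F} (h0 : 0 ∈ S)
    (hS : ∀ x ∈ S, c * x ∈ S) : 2 * #{x ∈ S | IsSquare x} = #S + 1 := by
  have hc0 : c ≠ 0 := by rintro rfl; exact hc IsSquare.zero
  have hinj : ∀ s : Finset F, Set.InjOn (c * ·) s := fun _ _ _ _ _ h ↦
    mul_left_cancel₀ hc0 h
  have hsplit := card_filter_add_card_filter_not (s := S) (IsSquare ·)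
  have hzero : 0 ∈ {x ∈ S | IsSquare x} := mem_filter.2 ⟨h0, IsSquare.zero⟩
  have hle : #({x ∈ S | IsSquare x}.erase 0) ≤ #{x ∈ S | ¬IsSquare x} := by
    refine card_le_card_of_injOn _ (fun x hx ↦ ?_) (hinj _)
    rw [mem_coe, mem_erase, mem_filter] at hx
    obtain ⟨hx0, hxS, hsq⟩ := hx
    exact mem_filter.2
      ⟨hS x hxS, fun h ↦ (FiniteField.isSquare_mul_iff_not_isSquare hc hx0).1 h hsq⟩
  have hge : #{x ∈ S | ¬IsSquare x} ≤ #({x ∈ S | IsSquare x}.erase 0) := by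
    refine card_le_card_of_injOn _ (fun x hx ↦ ?_) (hinj _)
    obtain ⟨hxS, hsq⟩ := mem_filter.1 (mem_coe.1 hx)
    have hx0 : x ≠ 0 := by rintro rfl; exact hsq IsSquare.zero
    exact mem_erase.2 ⟨mul_ne_zero hc0 hx0, mem_filter.2
      ⟨hS x hxS, (FiniteField.isSquare_mul_iff_not_isSquare hc hx0).2 hsq⟩⟩
  have := card_erase_add_one hzero
  omega

theorem AddMonoidHom.card_ker_mul_card_of_surjective {G H : Type*} [AddGroup G] [AddGroup H]
    (f : G →+ H) (hf : Surjective f) : Nat.card f.ker * Nat.card H = Nat.card G := by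
  rw [← AddSubgroup.card_mul_index f.ker, AddSubgroup.index_ker,
    AddMonoidHom.range_eq_top_of_surjective f hf, AddSubgroup.card_top]

theorem Algebra.trace_mul_left_surjective {K L : Type*} [Field K] [Field L] [Algebra K L]
    [FiniteDimensional K L] [Algebra.IsSeparable K L] {z : L} (hz : z ≠ 0) :
    Surjective fun x ↦ Algebra.trace K L (z * x) := fun a ↦
  let ⟨w, hw⟩ := Algebra.trace_surjective K L a
  ⟨z⁻¹ * w, by simp only [mul_inv_cancel_left₀ hz, hw]⟩

theorem stmt_5_general (p n : ℕ) (hp : p.Prime) (hpodd : Odd p) (hn : Odd n)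
    (F : Type*) [Field F] [Fintype F] [Algebra (ZMod p) F]
    (hF : Fintype.card F = p ^ n) (z : F) (hz : z ≠ 0) :
    Nat.card {x : F // Algebra.trace (ZMod p) F (z * x) = 0 ∧ ∃ y : F, y ^ 2 = x} =
      (p ^ (n - 1) + 1) / 2 := by
  classical
  have := Fact.mk hp
  let tr : F →ₗ[ZMod p] ZMod p :=
    (Algebra.trace (ZMod p) F).comp (LinearMap.mulLeft (ZMod p) z)
  let S : Finset F := {x | tr x = 0}
  have hfinrank : Module.finrank (ZMod p) F = n :=
    Nat.pow_right_injective hp.two_le <| show p ^ _ = p ^ n by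
      rw [← hF, Module.card_eq_pow_finrank (K := ZMod p), ZMod.card]
  have hcardS : #S * p = p ^ n := by
    have h := tr.toAddMonoidHom.card_ker_mul_card_of_surjective
      (Algebra.trace_mul_left_surjective hz)
    have hker : Nat.card tr.toAddMonoidHom.ker = #S := by
      rw [← Fintype.card_subtype, ← Nat.card_eq_fintype_card]
      rfl
    rwa [hker, Nat.card_zmod, Nat.card_eq_fintype_card, hF] at h
  obtain ⟨c, hc⟩ := FiniteField.exists_nonsquare (F := ZMod p)
    (by rw [ZMod.ringChar_zmod_n]; exact hpodd.ne_two_of_dvd_nat (dvd_refl p))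
  have hsq := FiniteField.two_mul_card_filter_isSquare
    (mt (IsSquare.of_algebraMap (hfinrank ▸ hn)) hc) (S := S) (by simp [S])
    (fun x hx ↦ by
      rw [mem_filter_univ] at hx ⊢
      rw [← Algebra.smul_def, map_smul, hx, smul_zero])
  have hS : #S = p ^ (n - 1) := by
    refine Nat.eq_of_mul_eq_mul_right hp.pos ?_
    rw [hcardS, ← pow_succ, Nat.sub_add_cancel hn.pos]
  have hcount : Nat.card {x : F // Algebra.trace (ZMod p) F (z * x) = 0 ∧ ∃ y : F, y ^ 2 = x} =
      #{x ∈ S | IsSquare x} := by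
    rw [Nat.card_eq_fintype_card, Fintype.card_subtype, filter_filter]
    simp only [isSquare_iff_exists_sq, eq_comm (b := _ ^ 2)]
    rfl
  omega

/-- For `p` an odd prime, `n` odd, and `z ≠ 0` in the field `F` of order
`p ^ n`, the number of quadratic residues in the kernel of the additive map
`x ↦ Tr(z * x)` (the field trace down to `F_p`) is `(p ^ (n - 1) + 1) / 2`. -/
theorem stmt_5 (p n : ℕ) (hp : p.Prime) (hpodd : Odd p) (hn : Odd n) (hn0 : 0 < n)
    (F : Type*) [Field F] [Fintype F] [Algebra (ZMod p) F]
    (hF : Fintype.card F = p ^ n) (z : F) (hz : z ≠ 0) :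
    Nat.card {x : F // Algebra.trace (ZMod p) F (z * x) = 0 ∧ ∃ y : F, y ^ 2 = x} =
      (p ^ (n - 1) + 1) / 2 :=
  stmt_5_general p n hp hpodd hn F hF z hz
end

section
/- Let p be an odd prime, j ≥ 1, and let k, l be integers with 0 ≤ k, l ≤ (p^j - 1)/2 and k + l < p^j - 1. Then ∑_{m=0}^{p^j - 1} C(m,k) · C(m,l) ≡ 0 (mod p). -/
/-!
Writing `C(m, l) = ∑ᵢ C(m - k, i) C(k, l - i)` (Vandermonde) and absorbing `C(m, k)` gives
`C(m, k) C(m, l) = ∑ᵢ C(m, k + i) C(k + i, k) C(k, l - i)`, so by the hockey-stick identity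
`∑_{m < n} C(m, k) C(m, l) = ∑ᵢ C(n, k + i + 1) C(k + i, k) C(k, l - i)` with `i ≤ l`.
For `n = p ^ j` every `C(p ^ j, k + i + 1)` is divisible by `p`, since `0 < k + i + 1 < p ^ j`.
-/

namespace Nat

theorem sum_range_choose_eq_choose_succ (n r : ℕ) :
    ∑ m ∈ Finset.range n, m.choose r = n.choose (r + 1) := by
  induction n with
  | zero => simp
  | succ n ih => rw [Finset.sum_range_succ, ih, choose_succ_succ' n r, add_comm]

theorem choose_mul_choose_sub (m k i : ℕ) :
    m.choose k * (m - k).choose i = m.choose (k + i) * (k + i).choose k := by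
  rw [choose_mul (le_add_right k i), Nat.add_sub_cancel_left]

theorem choose_mul_choose_eq_sum (m k l : ℕ) :
    m.choose k * m.choose l =
      ∑ i ∈ Finset.range (l + 1), m.choose (k + i) * ((k + i).choose k * k.choose (l - i)) := by
  rcases lt_or_ge m k with hmk | hkm
  · rw [choose_eq_zero_of_lt hmk, zero_mul]
    refine (Finset.sum_eq_zero fun i _ => ?_).symm
    rw [choose_eq_zero_of_lt (hmk.trans_le (le_add_right k i)), zero_mul]
  · have vandermonde : m.choose l =
        ∑ i ∈ Finset.range (l + 1), (m - k).choose i * k.choose (l - i) := by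
      conv_lhs => rw [← Nat.sub_add_cancel hkm, add_choose_eq]
      exact Finset.Nat.sum_antidiagonal_eq_sum_range_succ
        (fun a b => (m - k).choose a * k.choose b) l
    rw [vandermonde, Finset.mul_sum]
    refine Finset.sum_congr rfl fun i _ => ?_
    rw [← mul_assoc, choose_mul_choose_sub, mul_assoc]

theorem sum_range_choose_mul_choose (n k l : ℕ) :
    ∑ m ∈ Finset.range n, m.choose k * m.choose l =
      ∑ i ∈ Finset.range (l + 1), n.choose (k + i + 1) * ((k + i).choose k * k.choose (l - i)) := by
  simp_rw [choose_mul_choose_eq_sum _ k l]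
  rw [Finset.sum_comm]
  refine Finset.sum_congr rfl fun i _ => ?_
  rw [← Finset.sum_mul, sum_range_choose_eq_choose_succ]

theorem Prime.dvd_sum_range_pow_choose_mul_choose {p : ℕ} (hp : p.Prime) {j k l : ℕ}
    (hkl : k + l + 1 < p ^ j) :
    p ∣ ∑ m ∈ Finset.range (p ^ j), m.choose k * m.choose l := by
  rw [sum_range_choose_mul_choose]
  refine Finset.dvd_sum fun i hi => Dvd.dvd.mul_right ?_ _
  have hil : i < l + 1 := Finset.mem_range.mp hi
  exact hp.dvd_choose_pow (succ_ne_zero _) (by omega)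

end Nat

theorem stmt_8_general (p j : ℕ) (hp : p.Prime)
    (k l : ℕ)
    (hkl : k + l < p ^ j - 1) :
    ((∑ m ∈ Finset.range (p ^ j), m.choose k * m.choose l : ℕ) : ZMod p) = 0 :=
  (ZMod.natCast_eq_zero_iff _ _).mpr (hp.dvd_sum_range_pow_choose_mul_choose (by omega))

/-- For `p` an odd prime, `j ≥ 1`, and `0 ≤ k, l ≤ (p^j - 1)/2` with
`k + l < p^j - 1`, the sum `∑_{m=0}^{p^j-1} C(m,k)·C(m,l)` vanishes mod `p`. -/
theorem stmt_8 (p j : ℕ) (hp : p.Prime) (hodd : Odd p) (hj : 1 ≤ j)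
    (k l : ℕ) (hk : k ≤ (p ^ j - 1) / 2) (hl : l ≤ (p ^ j - 1) / 2)
    (hkl : k + l < p ^ j - 1) :
    ((∑ m ∈ Finset.range (p ^ j), m.choose k * m.choose l : ℕ) : ZMod p) = 0 :=
  stmt_8_general p j hp k l hkl
end

section
/- Let p be an odd prime and j ≥ 1. Then ∑_{m=0}^{p^j - 1} C(m, (p^j - 1)/2)^2 ≡ (-1)^{j(p-1)/2} (mod p). -/
/-!
Write `p = 2q + 1`. For one digit, `q + t ≡ -(q + 1 - t) (mod p)` turns `C(q + i, i)` into
`(-1)^i C(q, i)`, so `∑_{d<p} C(d, q)² ≡ ∑_{i≤q} C(q, i)² = C(2q, q) ≡ (-1)^q`.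
Since `(p^(j+1) - 1)/2 = p · (p^j - 1)/2 + q`, Lucas' theorem factors the sum over
`m = p a + b < p^(j+1)` as the sum for `p^j` times the one-digit sum, and induction on `j`
concludes.
-/

open Finset

lemma Finset.sum_range_mul_eq_sum_sum {M : Type*} [AddCommMonoid M] (f : ℕ → M) (p n : ℕ) :
    ∑ m ∈ range (p * n), f m = ∑ a ∈ range n, ∑ b ∈ range p, f (p * a + b) := by
  induction n with
  | zero => simp
  | succ n ih => rw [Nat.mul_succ, sum_range_add, ih, sum_range_succ]

namespace Nat

lemma cast_add_descFactorial_self {R : Type*} [CommRing R] {a b : ℕ} (hab : (a + b + 1 : R) = 0)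
    {i : ℕ} (hi : i ≤ b) :
    ((a + i).descFactorial i : R) = (-1) ^ i * b.descFactorial i := by
  induction i with
  | zero => simp
  | succ i ih =>
    have hneg : ((a + i + 1 : ℕ) : R) = -((b - i : ℕ) : R) := by
      rw [eq_neg_iff_add_eq_zero, ← Nat.cast_add, show a + i + 1 + (b - i) = a + b + 1 by omega]
      exact_mod_cast hab
    rw [← add_assoc, succ_descFactorial_succ, descFactorial_succ, Nat.cast_mul, hneg,
      ih (by omega), Nat.cast_mul, pow_succ]
    ring

lemma cast_add_choose_self {p a b i : ℕ} [Fact p.Prime] (hab : a + b + 1 = p) (hi : i ≤ b) :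
    ((a + i).choose i : ZMod p) = (-1) ^ i * b.choose i := by
  have hfact : (i ! : ZMod p) ≠ 0 := by
    rw [Ne, ZMod.natCast_eq_zero_iff, (Fact.out : p.Prime).dvd_factorial]
    omega
  apply mul_left_cancel₀ hfact
  have hab' : (a + b + 1 : ZMod p) = 0 := by
    exact_mod_cast (ZMod.natCast_eq_zero_iff _ p).mpr hab.symm.dvd
  rw [mul_left_comm, ← Nat.cast_mul, ← Nat.cast_mul, ← descFactorial_eq_factorial_mul_choose,
    ← descFactorial_eq_factorial_mul_choose, cast_add_descFactorial_self hab' hi]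

lemma cast_sum_range_choose_sq_of_eq_two_mul_add_one {p q : ℕ} [Fact p.Prime]
    (hpq : p = 2 * q + 1) :
    ((∑ d ∈ range p, d.choose q ^ 2 : ℕ) : ZMod p) = (-1) ^ q := by
  have hlow : ∑ d ∈ range q, d.choose q ^ 2 = 0 :=
    sum_eq_zero fun d hd => by rw [choose_eq_zero_of_lt (mem_range.mp hd), zero_pow two_ne_zero]
  have hhigh : ∀ i ∈ range (q + 1),
      ((q + i).choose q ^ 2 : ZMod p) = (q.choose i ^ 2 : ℕ) := by
    intro i hi
    rw [choose_symm_add, cast_add_choose_self (by omega) (mem_range_succ_iff.mp hi), mul_pow,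
      ← pow_mul, pow_mul', neg_one_sq, one_pow, one_mul, Nat.cast_pow]
  rw [show range p = range (q + (q + 1)) from congrArg range (by omega), sum_range_add, hlow,
    zero_add]
  push_cast
  rw [sum_congr rfl hhigh, ← Nat.cast_sum, sum_range_choose_sq, two_mul, ← choose_symm_add,
    cast_add_choose_self (by omega) le_rfl, choose_self, Nat.cast_one, mul_one]

lemma cast_choose_mul_add_mul_add {p a b k r : ℕ} [Fact p.Prime] (hb : b < p) (hr : r < p) :
    ((p * a + b).choose (p * k + r) : ZMod p) = a.choose k * b.choose r := by
  have hdiv {x y : ℕ} (hy : y < p) : (p * x + y) / p = x := by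
    rw [Nat.mul_add_div (by omega), Nat.div_eq_of_lt hy, add_zero]
  rw [← Nat.cast_mul, ZMod.natCast_eq_natCast_iff, mul_comm (a.choose k)]
  simpa [Nat.mod_eq_of_lt hb, Nat.mod_eq_of_lt hr, hdiv hb, hdiv hr] using
    Choose.choose_modEq_choose_mod_mul_choose_div_nat (n := p * a + b) (k := p * k + r) (p := p)

lemma cast_sum_range_choose_sq_mul_add {p n k r : ℕ} [Fact p.Prime] (hr : r < p) :
    ((∑ m ∈ range (p * n), m.choose (p * k + r) ^ 2 : ℕ) : ZMod p) =
      ((∑ a ∈ range n, a.choose k ^ 2 : ℕ) : ZMod p) *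
        ((∑ b ∈ range p, b.choose r ^ 2 : ℕ) : ZMod p) := by
  push_cast
  rw [sum_range_mul_eq_sum_sum, sum_mul_sum]
  refine sum_congr rfl fun a _ => sum_congr rfl fun b hb => ?_
  rw [cast_choose_mul_add_mul_add (mem_range.mp hb) hr, mul_pow]

end Nat

theorem stmt_9_general (p j : ℕ) (hp : p.Prime) (hodd : Odd p) :
    ((∑ m ∈ Finset.range (p ^ j), (m.choose ((p ^ j - 1) / 2)) ^ 2 : ℕ) : ZMod p) =
      (-1 : ZMod p) ^ (j * ((p - 1) / 2)) := by
  have : Fact p.Prime := ⟨hp⟩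
  obtain ⟨q, hpq⟩ := hodd
  rw [show (p - 1) / 2 = q by omega]
  induction j with
  | zero => simp
  | succ j ih =>
    obtain ⟨k, hk⟩ : Odd (p ^ j) := Odd.pow ⟨q, hpq⟩
    have hhalf : (p ^ (j + 1) - 1) / 2 = p * ((p ^ j - 1) / 2) + q := by
      rw [pow_succ, hk, hpq, show (2 * k + 1 - 1) / 2 = k by omega,
        show (2 * k + 1) * (2 * q + 1) = 2 * ((2 * q + 1) * k + q) + 1 by ring]
      omega
    rw [hhalf, pow_succ', Nat.cast_sum_range_choose_sq_mul_add (by omega), ih,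
      Nat.cast_sum_range_choose_sq_of_eq_two_mul_add_one hpq, ← pow_add, add_one_mul]

/-- For `p` an odd prime and `j ≥ 1`,
`∑_{m=0}^{p^j-1} C(m,(p^j-1)/2)² ≡ (-1)^{j(p-1)/2} (mod p)`. -/
theorem stmt_9 (p j : ℕ) (hp : p.Prime) (hodd : Odd p) (hj : 1 ≤ j) :
    ((∑ m ∈ Finset.range (p ^ j), (m.choose ((p ^ j - 1) / 2)) ^ 2 : ℕ) : ZMod p) =
      (-1 : ZMod p) ^ (j * ((p - 1) / 2)) :=
  stmt_9_general p j hp hodd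
end

section
/- Let p be an odd prime, q a power of p, and n a positive integer. Then the exponent of the group UT(n,q) of upper unitriangular n×n matrices over F_q equals p^t, where t = ⌈log_p(n)⌉. -/
/-- The group of upper unitriangular `n × n` matrices over a field, as a
submonoid of the matrix monoid. -/
def UT (n : ℕ) (F : Type*) [Field F] : Submonoid (Matrix (Fin n) (Fin n) F) where
  carrier := {M | (∀ i j : Fin n, j < i → M i j = 0) ∧ ∀ i : Fin n, M i i = 1}
  one_mem' := by
    refine ⟨fun i j h => Matrix.one_apply_ne (Ne.symm (ne_of_lt h)), ?_⟩
    · intro i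
      exact Matrix.one_apply_eq i
  mul_mem' := by
    rintro a b ⟨ha1, ha2⟩ ⟨hb1, hb2⟩
    refine ⟨?_, ?_⟩
    · intro i j hji
      rw [Matrix.mul_apply]
      apply Finset.sum_eq_zero
      intro k _
      rcases lt_or_ge k i with hk | hk
      · rw [ha1 i k hk, zero_mul]
      · rw [hb1 k j (lt_of_lt_of_le hji hk), mul_zero]
    · intro i
      rw [Matrix.mul_apply, Finset.sum_eq_single i]
      · rw [ha2, hb2, one_mul]
      · intro k _ hk
        rcases lt_or_ge k i with h | h
        · rw [ha1 i k h, zero_mul]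
        · rw [hb1 k i (lt_of_le_of_ne h (Ne.symm hk)), mul_zero]
      · intro h
        exact absurd (Finset.mem_univ i) h

/-!
Write `g ∈ UT(n, F)` as `1 + N` with `N` strictly upper triangular, so `N ^ n = 0`. In
characteristic `p` the Frobenius identity `(1 + N) ^ p ^ k = 1 + N ^ p ^ k` shows that
`g ^ p ^ k = 1` as soon as `n ≤ p ^ k`. Conversely, for the nilpotent Jordan block `N` one has
`N ^ k ≠ 0` for `k < n`, so `1 + N` has order exactly the least power `p ^ k ≥ n`, which is
`p ^ ⌈log_p n⌉`.
-/

namespace Matrix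

variable {n : ℕ} {R : Type*}

section Semiring

variable [Semiring R]

lemma pow_apply_eq_zero_of_lt_add {N : Matrix (Fin n) (Fin n) R}
    (hN : ∀ i j : Fin n, (j : ℕ) ≤ i → N i j = 0) (k : ℕ) {i j : Fin n}
    (hij : (j : ℕ) < i + k) : (N ^ k) i j = 0 := by
  induction k generalizing i with
  | zero => exact one_apply_ne (by rintro rfl; omega)
  | succ k ih =>
    rw [pow_succ', mul_apply]
    refine Finset.sum_eq_zero fun l _ => ?_
    rcases le_or_gt (l : ℕ) i with hl | hl
    · rw [hN i l hl, zero_mul]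
    · rw [ih (by omega), mul_zero]

lemma pow_eq_zero_of_le {N : Matrix (Fin n) (Fin n) R}
    (hN : ∀ i j : Fin n, (j : ℕ) ≤ i → N i j = 0) {m : ℕ} (hm : n ≤ m) : N ^ m = 0 := by
  ext i j
  exact pow_apply_eq_zero_of_lt_add hN m (by omega)

def superdiagonalShift : Matrix (Fin n) (Fin n) R :=
  of fun i j => if (i : ℕ) + 1 = j then 1 else 0

lemma superdiagonalShift_pow_apply (k : ℕ) (i j : Fin n) :
    ((superdiagonalShift : Matrix (Fin n) (Fin n) R) ^ k) i j =
      if (i : ℕ) + k = j then 1 else 0 := by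
  induction k generalizing i with
  | zero => simp [one_apply, Fin.ext_iff]
  | succ k ih =>
    rw [pow_succ', mul_apply]
    rcases lt_or_ge ((i : ℕ) + 1) n with hi | hi
    · rw [Finset.sum_eq_single_of_mem (⟨i + 1, hi⟩ : Fin n) (Finset.mem_univ _)]
      · rw [ih, superdiagonalShift, of_apply, if_pos rfl, one_mul]
        simp only [add_assoc, add_comm 1 k]
      · intro l _ hl
        rw [superdiagonalShift, of_apply, if_neg (fun h => hl (Fin.ext h.symm)), zero_mul]
    · rw [Finset.sum_eq_zero, if_neg (by omega)]
      intro l _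
      rw [superdiagonalShift, of_apply, if_neg (by omega), zero_mul]

lemma superdiagonalShift_pow_eq_zero_iff [Nontrivial R] {k : ℕ} :
    (superdiagonalShift : Matrix (Fin n) (Fin n) R) ^ k = 0 ↔ n ≤ k := by
  refine ⟨fun h => ?_, pow_eq_zero_of_le fun i j hij => ?_⟩
  · by_contra! hk
    have := congr_fun₂ h ⟨0, by omega⟩ ⟨k, hk⟩
    simp [superdiagonalShift_pow_apply] at this
  · rw [superdiagonalShift, of_apply, if_neg (by omega)]

end Semiring

lemma one_add_pow_char_pow [CommRing R] (p : ℕ) [Fact p.Prime] [CharP R p]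
    (N : Matrix (Fin n) (Fin n) R) (k : ℕ) : (1 + N) ^ p ^ k = 1 + N ^ p ^ k := by
  rcases isEmpty_or_nonempty (Fin n) with _ | _
  · exact Subsingleton.elim _ _
  · rw [add_pow_char_pow_of_commute p k (Commute.one_left N), one_pow]

end Matrix

open Matrix

namespace UT

variable {n : ℕ} {F : Type*} [Field F]

lemma sub_one_apply_eq_zero {M : Matrix (Fin n) (Fin n) F} (hM : M ∈ UT n F) {i j : Fin n}
    (hij : (j : ℕ) ≤ i) : (M - 1) i j = 0 := by
  rcases Nat.lt_or_eq_of_le hij with hlt | heq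
  · rw [Matrix.sub_apply, hM.1 i j hlt, one_apply_ne (by rintro rfl; omega), sub_zero]
  · rw [Fin.ext heq, Matrix.sub_apply, hM.2, one_apply_eq, sub_self]

lemma pow_prime_pow_eq_one (p : ℕ) [Fact p.Prime] [CharP F p] (g : UT n F) {k : ℕ}
    (hk : n ≤ p ^ k) : g ^ p ^ k = 1 := by
  have hN := pow_eq_zero_of_le (fun _ _ => sub_one_apply_eq_zero g.2) hk
  ext1
  rw [SubmonoidClass.coe_pow, OneMemClass.coe_one]
  calc (g : Matrix (Fin n) (Fin n) F) ^ p ^ k = (1 + (g - 1)) ^ p ^ k := by rw [add_sub_cancel]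
    _ = 1 := by rw [one_add_pow_char_pow p, hN, add_zero]

def jordanBlock : UT n F :=
  ⟨1 + superdiagonalShift, fun i j hij => by
      rw [Matrix.add_apply, one_apply_ne hij.ne', superdiagonalShift, of_apply, if_neg (by omega),
        add_zero],
    fun i => by
      rw [Matrix.add_apply, one_apply_eq, superdiagonalShift, of_apply, if_neg (by omega),
        add_zero]⟩

lemma orderOf_jordanBlock (p : ℕ) [hp : Fact p.Prime] [CharP F p] :
    orderOf (jordanBlock : UT n F) = p ^ Nat.clog p n := by
  have hdvd := orderOf_dvd_of_pow_eq_one <|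
    pow_prime_pow_eq_one p (jordanBlock : UT n F) (Nat.le_pow_clog hp.out.one_lt n)
  obtain ⟨r, hr, hord⟩ := (Nat.dvd_prime_pow hp.out).mp hdvd
  have hpow : (jordanBlock : UT n F) ^ p ^ r = 1 := hord ▸ pow_orderOf_eq_one _
  have hshift : (superdiagonalShift : Matrix (Fin n) (Fin n) F) ^ p ^ r = 0 := by
    have := congr_arg Subtype.val hpow
    rwa [SubmonoidClass.coe_pow, jordanBlock, one_add_pow_char_pow p, OneMemClass.coe_one,
      add_eq_left] at this
  rw [hord, le_antisymm hr (Nat.clog_le_of_le_pow (superdiagonalShift_pow_eq_zero_iff.mp hshift))]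

theorem exponent_eq (p : ℕ) [hp : Fact p.Prime] [CharP F p] :
    Monoid.exponent (UT n F) = p ^ Nat.clog p n :=
  Nat.dvd_antisymm
    (Monoid.exponent_dvd_of_forall_pow_eq_one fun g =>
      pow_prime_pow_eq_one p g (Nat.le_pow_clog hp.out.one_lt n))
    (orderOf_jordanBlock (F := F) p ▸ Monoid.order_dvd_exponent jordanBlock)

end UT

theorem stmt_11_general (p e n : ℕ) (hp : p.Prime)
    (F : Type*) [Field F] [Fintype F] (hF : Fintype.card F = p ^ e) :
    Monoid.exponent (UT n F) = p ^ Nat.clog p n := by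
  have : Fact p.Prime := ⟨hp⟩
  have : CharP F p := charP_of_card_eq_prime_pow hF
  exact UT.exponent_eq p

/-- The exponent of the unitriangular group `UT(n, q)` over the finite field of
order `q = p ^ e` is `p ^ ⌈log_p n⌉`. -/
theorem stmt_11 (p e n : ℕ) (hp : p.Prime) (hodd : Odd p) (he : 0 < e) (hn : 0 < n)
    (F : Type*) [Field F] [Fintype F] (hF : Fintype.card F = p ^ e) :
    Monoid.exponent (UT n F) = p ^ Nat.clog p n :=
  stmt_11_general p e n hp F hF
end

section
/- Let p be an odd prime, q a power of p, n a positive integer, and let P be the group of (2n)×(2n) matrices over F_q of block form [[Lᵀ, A],[0, L⁻¹]] with L ∈ UT(n,q) unitriangular and AL symmetric. If L has order p^k in UT(n,q), then the matrix M = [[Lᵀ,A],[0,L⁻¹]] has order either p^k or p^{k+1}. -/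
/-!
Write `M = [[Lᵀ, A], [0, L⁻¹]]`. Powers of a block upper triangular matrix are block upper
triangular with the powers of the diagonal blocks on the diagonal. Hence `Lᵀ ^ m = 1` whenever
`M ^ m = 1`, so `p ^ k ∣ orderOf M`; and `M ^ p ^ k = [[1, C], [0, 1]]` for some `C`, whose
`p`-th power is `[[1, p • C], [0, 1]] = 1` in characteristic `p`, so `orderOf M ∣ p ^ (k + 1)`.
-/

open Matrix

theorem Nat.Prime.eq_pow_or_eq_pow_succ_of_dvd {p a k : ℕ} (hp : p.Prime)
    (hdvd : a ∣ p ^ (k + 1)) (hdvd' : p ^ k ∣ a) : a = p ^ k ∨ a = p ^ (k + 1) := by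
  obtain ⟨j, hj, rfl⟩ := (Nat.dvd_prime_pow hp).mp hdvd
  have hkj : k ≤ j := (Nat.pow_dvd_pow_iff_le_right hp.one_lt).mp hdvd'
  rcases hkj.eq_or_lt with rfl | hlt
  · exact Or.inl rfl
  · exact Or.inr (by rw [le_antisymm hj hlt])

namespace Matrix

theorem orderOf_transpose {m R : Type*} [Fintype m] [DecidableEq m] [CommSemiring R]
    (A : Matrix m m R) : orderOf Aᵀ = orderOf A :=
  orderOf_eq_orderOf_iff.mpr fun k => by rw [← transpose_pow, transpose_eq_one]

section BlockTriangular

variable {l m R : Type*} [Fintype l] [Fintype m] [DecidableEq l] [DecidableEq m] [Semiring R]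

theorem exists_fromBlocks_zero₂₁_pow (A : Matrix l l R) (B : Matrix l m R) (D : Matrix m m R)
    (k : ℕ) : ∃ C, fromBlocks A B 0 D ^ k = fromBlocks (A ^ k) C 0 (D ^ k) := by
  induction k with
  | zero => exact ⟨0, by rw [pow_zero, pow_zero, pow_zero, fromBlocks_one]⟩
  | succ k ih =>
    obtain ⟨C, hC⟩ := ih
    exact ⟨A ^ k * B + C * D, by simp [pow_succ, hC, fromBlocks_multiply]⟩

theorem fromBlocks_one_zero_one_pow (B : Matrix l m R) (k : ℕ) :
    fromBlocks (1 : Matrix l l R) B 0 (1 : Matrix m m R) ^ k = fromBlocks 1 (k • B) 0 1 := by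
  induction k with
  | zero => simp [fromBlocks_one]
  | succ k ih => simp [pow_succ, ih, fromBlocks_multiply, succ_nsmul, add_comm]

theorem orderOf_dvd_orderOf_fromBlocks_zero₂₁ (A : Matrix l l R) (B : Matrix l m R)
    (D : Matrix m m R) : orderOf A ∣ orderOf (fromBlocks A B 0 D) := by
  apply orderOf_dvd_of_pow_eq_one
  obtain ⟨C, hC⟩ := exists_fromBlocks_zero₂₁_pow A B D (orderOf (fromBlocks A B 0 D))
  have h := pow_orderOf_eq_one (fromBlocks A B 0 D)
  rw [hC, ← fromBlocks_one, fromBlocks_inj] at h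
  exact h.1

theorem fromBlocks_zero₂₁_pow_mul_eq_one (p : ℕ) [CharP R p] {A : Matrix l l R}
    (B : Matrix l m R) {D : Matrix m m R} {k : ℕ} (hA : A ^ k = 1) (hD : D ^ k = 1) :
    fromBlocks A B 0 D ^ (k * p) = 1 := by
  obtain ⟨C, hC⟩ := exists_fromBlocks_zero₂₁_pow A B D k
  have hpC : p • C = 0 := by rw [← Nat.cast_smul_eq_nsmul R, CharP.cast_eq_zero, zero_smul]
  rw [pow_mul, hC, hA, hD, fromBlocks_one_zero_one_pow C p, hpC, fromBlocks_one]

end BlockTriangular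

end Matrix

theorem stmt_13_general (p e n k : ℕ) (hp : p.Prime)
    (F : Type*) [Field F] [Fintype F] (hF : Fintype.card F = p ^ e)
    (L A : Matrix (Fin n) (Fin n) F)
    (hord : orderOf L = p ^ k) :
    orderOf (Matrix.fromBlocks Lᵀ A 0 L⁻¹) = p ^ k ∨
      orderOf (Matrix.fromBlocks Lᵀ A 0 L⁻¹) = p ^ (k + 1) := by
  have : Fact p.Prime := ⟨hp⟩
  have : CharP F p := charP_of_card_eq_prime_pow hF
  have hL : L ^ p ^ k = 1 := hord ▸ pow_orderOf_eq_one L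
  apply hp.eq_pow_or_eq_pow_succ_of_dvd
  · apply orderOf_dvd_of_pow_eq_one
    rw [pow_succ]
    exact fromBlocks_zero₂₁_pow_mul_eq_one p A (by rw [← transpose_pow, hL, transpose_one])
      (by rw [inv_pow', hL, inv_one])
  · rw [← hord, ← orderOf_transpose]
    exact orderOf_dvd_orderOf_fromBlocks_zero₂₁ _ _ _

/-- If `L` is unitriangular of order `p ^ k` and `A L` is symmetric, then the
symplectic-Sylow element `[[Lᵀ, A], [0, L⁻¹]]` has order `p ^ k` or `p ^ (k+1)`. -/
theorem stmt_13 (p e n k : ℕ) (hp : p.Prime) (hodd : Odd p) (he : 0 < e) (hn : 0 < n)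
    (F : Type*) [Field F] [Fintype F] (hF : Fintype.card F = p ^ e)
    (L A : Matrix (Fin n) (Fin n) F)
    (hL1 : ∀ i j : Fin n, j < i → L i j = 0) (hL2 : ∀ i : Fin n, L i i = 1)
    (hAL : (A * L)ᵀ = A * L) (hord : orderOf L = p ^ k) :
    orderOf (Matrix.fromBlocks Lᵀ A 0 L⁻¹) = p ^ k ∨
      orderOf (Matrix.fromBlocks Lᵀ A 0 L⁻¹) = p ^ (k + 1) :=
  stmt_13_general p e n k hp F hF L A hord
end

section
/- Let p be an odd prime, q a power of p, n a positive integer, and let P be the group of (2n)×(2n) matrices over F_q of block form X = [[Lᵀ, A],[0, L⁻¹]] with L ∈ UT(n,q) and AL symmetric. Then the map κ : P → (F_q^+)^n sending X to (A_{1,1}, L_{1,2}, L_{2,3}, ..., L_{n-1,n}) is a surjective group homomorphism. -/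
/-!
Write `X = [[Lᵀ, A], [0, L⁻¹]]`. The product of two elements of `P` has upper-left block
`L₁ᵀ L₂ᵀ = (L₂ L₁)ᵀ` and upper-right block `L₁ᵀ A₂ + A₁ L₂⁻¹`. For unitriangular matrices the
superdiagonal entries of a product are the sums of those of the factors, and the first column of
`L` and of `L⁻¹` is the first unit vector, so `(L₁ᵀ A₂ + A₁ L₂⁻¹)₁₁ = (A₂)₁₁ + (A₁)₁₁`.
For surjectivity take `L` with the prescribed superdiagonal and `A = E L⁻¹`, where `E` is the
symmetric matrix with the prescribed `(1,1)` entry and zeros elsewhere.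
-/

open Matrix

/-- Membership in the standard Sylow `p`-subgroup `P` of `Sp_{2n}(q)`:
matrices of block form `[[Lᵀ, A], [0, L⁻¹]]` with `L` unitriangular and `A L`
symmetric. -/
def memP {n : ℕ} {F : Type*} [Field F]
    (M : Matrix (Fin n ⊕ Fin n) (Fin n ⊕ Fin n) F) : Prop :=
  ∃ L A : Matrix (Fin n) (Fin n) F,
    (∀ i j : Fin n, j < i → L i j = 0) ∧ (∀ i : Fin n, L i i = 1) ∧
    (A * L)ᵀ = A * L ∧ M = Matrix.fromBlocks Lᵀ A 0 L⁻¹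

/-- The map `κ` sending `[[Lᵀ, A], [0, L⁻¹]] ∈ P` to
`(A_{1,1}, L_{1,2}, L_{2,3}, …, L_{n-1,n})`. -/
def kappa {n : ℕ} {F : Type*} [Field F] (hn : 0 < n)
    (M : Matrix (Fin n ⊕ Fin n) (Fin n ⊕ Fin n) F) : Fin n → F :=
  fun i =>
    if (i : ℕ) = 0 then M (Sum.inl ⟨0, hn⟩) (Sum.inr ⟨0, hn⟩)
    else M (Sum.inl i) (Sum.inl ⟨(i : ℕ) - 1, by have := i.isLt; omega⟩)

namespace Matrix.BlockTriangular

variable {m R : Type*} [LinearOrder m] [Fintype m]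

section Semiring

variable [NonUnitalNonAssocSemiring R] {M : Matrix m m R}

theorem mul_apply_of_isBot (hM : M.IsUpperTriangular) (N : Matrix m m R) {b : m} (hb : IsBot b)
    (i : m) : (N * M) i b = N i b * M b b := by
  rw [mul_apply, Finset.sum_eq_single b]
  · exact fun k _ hk => by rw [hM (lt_of_le_of_ne (hb k) (Ne.symm hk)), mul_zero]
  · simp

theorem transpose_mul_apply_of_isBot (hM : M.IsUpperTriangular) (N : Matrix m m R) {b : m}
    (hb : IsBot b) (j : m) : (Mᵀ * N) b j = M b b * N b j := by
  rw [mul_apply, Finset.sum_eq_single b]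
  · rfl
  · exact fun k _ hk => by
      rw [transpose_apply, hM (lt_of_le_of_ne (hb k) (Ne.symm hk)), zero_mul]
  · simp

theorem mul_apply_of_covBy (hM : M.IsUpperTriangular) {N : Matrix m m R}
    (hN : N.IsUpperTriangular) {j k : m} (hjk : j ⋖ k) :
    (M * N) j k = M j j * N j k + M j k * N k k := by
  rw [mul_apply, ← Finset.sum_pair (f := fun l => M j l * N l k) hjk.lt.ne]
  refine (Finset.sum_subset (Finset.subset_univ _) fun l _ hl => ?_).symm
  simp only [Finset.mem_insert, Finset.mem_singleton, not_or] at hl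
  rcases lt_or_gt_of_ne hl.1 with hlj | hjl
  · rw [hM hlj, zero_mul]
  · have hkl : k < l := lt_of_le_of_ne (not_lt.1 (hjk.2 hjl)) (Ne.symm hl.2)
    rw [hN hkl, mul_zero]

end Semiring

variable [CommRing R] [DecidableEq m] {M : Matrix m m R}

theorem inv_mul_cancel_of_diag_eq_one (hM : M.IsUpperTriangular) (hdiag : ∀ i, M i i = 1) :
    M⁻¹ * M = 1 :=
  nonsing_inv_mul M <| by simp [det_of_isUpperTriangular hM, hdiag]

theorem inv_apply_of_isBot (hM : M.IsUpperTriangular) (hdiag : ∀ i, M i i = 1) {b : m}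
    (hb : IsBot b) (i : m) : M⁻¹ i b = (1 : Matrix m m R) i b := by
  rw [← inv_mul_cancel_of_diag_eq_one hM hdiag, mul_apply_of_isBot hM _ hb, hdiag, mul_one]

theorem mul_inv_apply_of_isBot (hM : M.IsUpperTriangular) (hdiag : ∀ i, M i i = 1)
    (N : Matrix m m R) {b : m} (hb : IsBot b) (i : m) : (N * M⁻¹) i b = N i b := by
  simp_rw [mul_apply, inv_apply_of_isBot hM hdiag hb, ← mul_apply, Matrix.mul_one]

end Matrix.BlockTriangular

theorem Matrix.exists_isUpperTriangular_diag_eq_one_of_covBy {m R : Type*} [Preorder m]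
    [Zero R] [One R] (v : m → R) :
    ∃ L : Matrix m m R, L.IsUpperTriangular ∧ (∀ i, L i i = 1) ∧ ∀ j k, j ⋖ k → L j k = v k := by
  classical
  refine ⟨of fun a b => if a = b then 1 else if a ⋖ b then v b else 0,
    fun a b (hba : b < a) => ?_, fun i => by simp, fun j k hjk => by simp [hjk.lt.ne, hjk]⟩
  have hab : ¬a ⋖ b := fun h => lt_asymm hba h.lt
  simp [hba.ne', hab]

theorem Fin.mk_sub_one_covBy {n : ℕ} {i : Fin n} (hi : (i : ℕ) ≠ 0) :
    (⟨(i : ℕ) - 1, by omega⟩ : Fin n) ⋖ i :=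
  Fin.covBy_iff.2 <| by simp only [Nat.covBy_iff_add_one_eq]; omega

theorem Fin.isBot_mk_zero {n : ℕ} (hn : 0 < n) : IsBot (⟨0, hn⟩ : Fin n) :=
  fun _ => Nat.zero_le _

section Kappa

variable {n : ℕ} {F : Type*} [Field F] (hn : 0 < n)

theorem kappa_fromBlocks_apply_of_eq_zero (T A C D : Matrix (Fin n) (Fin n) F) {i : Fin n}
    (hi : (i : ℕ) = 0) : kappa hn (fromBlocks T A C D) i = A ⟨0, hn⟩ ⟨0, hn⟩ := by
  simp [kappa, hi]

theorem kappa_fromBlocks_apply_of_ne_zero (T A C D : Matrix (Fin n) (Fin n) F) {i : Fin n}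
    (hi : (i : ℕ) ≠ 0) : kappa hn (fromBlocks T A C D) i = T i ⟨(i : ℕ) - 1, by omega⟩ := by
  simp [kappa, hi]

theorem kappa_mul {M N : Matrix (Fin n ⊕ Fin n) (Fin n ⊕ Fin n) F} (hM : memP M) (hN : memP N) :
    kappa hn (M * N) = kappa hn M + kappa hn N := by
  obtain ⟨L₁, A₁, hL₁, hdiag₁, -, rfl⟩ := hM
  obtain ⟨L₂, A₂, hL₂, hdiag₂, -, rfl⟩ := hN
  have hU₁ : L₁.IsUpperTriangular := fun i j => hL₁ i j
  have hU₂ : L₂.IsUpperTriangular := fun i j => hL₂ i j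
  funext i
  rw [fromBlocks_multiply, Pi.add_apply]
  by_cases hi : (i : ℕ) = 0
  · simp only [kappa_fromBlocks_apply_of_eq_zero hn _ _ _ _ hi]
    rw [Matrix.add_apply,
      hU₁.transpose_mul_apply_of_isBot _ (Fin.isBot_mk_zero hn),
      hU₂.mul_inv_apply_of_isBot hdiag₂ _ (Fin.isBot_mk_zero hn), hdiag₁, one_mul, add_comm]
  · simp only [kappa_fromBlocks_apply_of_ne_zero hn _ _ _ _ hi, Matrix.mul_zero, add_zero,
      ← transpose_mul, transpose_apply, hU₂.mul_apply_of_covBy hU₁ (Fin.mk_sub_one_covBy hi),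
      hdiag₁, hdiag₂, one_mul, mul_one, add_comm]

theorem exists_memP_kappa_eq (v : Fin n → F) :
    ∃ M : Matrix (Fin n ⊕ Fin n) (Fin n ⊕ Fin n) F, memP M ∧ kappa hn M = v := by
  obtain ⟨L, hL, hdiag, hsuper⟩ := exists_isUpperTriangular_diag_eq_one_of_covBy v
  let E : Matrix (Fin n) (Fin n) F := single ⟨0, hn⟩ ⟨0, hn⟩ (v ⟨0, hn⟩)
  have hEL : E * L⁻¹ * L = E := by
    rw [Matrix.mul_assoc, hL.inv_mul_cancel_of_diag_eq_one hdiag, Matrix.mul_one]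
  refine ⟨fromBlocks Lᵀ (E * L⁻¹) 0 L⁻¹,
    ⟨L, E * L⁻¹, fun i j h => hL h, hdiag, by rw [hEL]; simp [E], rfl⟩, funext fun i => ?_⟩
  by_cases hi : (i : ℕ) = 0
  · rw [kappa_fromBlocks_apply_of_eq_zero hn _ _ _ _ hi,
      hL.mul_inv_apply_of_isBot hdiag _ (Fin.isBot_mk_zero hn)]
    simp [E, show i = ⟨0, hn⟩ from Fin.ext hi]
  · rw [kappa_fromBlocks_apply_of_ne_zero hn _ _ _ _ hi, transpose_apply,
      hsuper _ _ (Fin.mk_sub_one_covBy hi)]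

end Kappa

theorem stmt_14_general (n : ℕ) (hn : 0 < n) (F : Type*) [Field F] :
    (∀ M N : Matrix (Fin n ⊕ Fin n) (Fin n ⊕ Fin n) F, memP M → memP N →
        kappa hn (M * N) = kappa hn M + kappa hn N) ∧
    (∀ v : Fin n → F, ∃ M : Matrix (Fin n ⊕ Fin n) (Fin n ⊕ Fin n) F,
        memP M ∧ kappa hn M = v) :=
  ⟨fun _ _ => kappa_mul hn, exists_memP_kappa_eq hn⟩

/-- `κ : P → (F_q⁺)ⁿ` is a surjective group homomorphism. -/
theorem stmt_14 (p e n : ℕ) (hp : p.Prime) (hodd : Odd p) (he : 0 < e) (hn : 0 < n)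
    (F : Type*) [Field F] [Fintype F] (hF : Fintype.card F = p ^ e) :
    (∀ M N : Matrix (Fin n ⊕ Fin n) (Fin n ⊕ Fin n) F, memP M → memP N →
        kappa hn (M * N) = kappa hn M + kappa hn N) ∧
    (∀ v : Fin n → F, ∃ M : Matrix (Fin n ⊕ Fin n) (Fin n ⊕ Fin n) F,
        memP M ∧ kappa hn M = v) :=
  stmt_14_general n hn F
end

section
/- Let p be an odd prime, q a power of p, j a positive integer, and n = (p^j+1)/2. Let G = Sp_{2n}(q) and g = I_{2n} + (-1)^{j(p-1)/2} E_{n,2n}. Then the centralizer C_G(g) admits a surjective group homomorphism π onto Sp_{p^j-1}(q) × {±1}, and the kernel of π has exponent p and contains g. -/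
/-!
Index `Sp_{2(m+1)}` by `Fin (m + 1) ⊕ Fin (m + 1)`, so that the paper's indices `n`, `2n` are
`inl (last m)`, `inr (last m)`, and let `E` be the matrix unit there. As `g = 1 + cE` with
`c ≠ 0`, `C(g)` is the centralizer of `E`: the matrices whose column `inl (last m)` and row
`inr (last m)` vanish off the diagonal, where both carry the same entry `λ`. For these, deleting
the two last indices and reading off `λ` are both multiplicative. The symplectic condition on the
two last rows forces `λ² = 1`, and on the other rows it says that the remaining block lies in
`Sp_{2m}`; the block diagonal matrices `diag(B, λ, λ)` show that the resulting map onto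
`Sp_{2m} × {±1}` is surjective. On the kernel, `M - 1` strictly
raises the level `inl (last m) < rest < inr (last m)`, so `(M - 1)³ = 0` and
`M ^ p - 1 = (M - 1) ^ p = 0` in characteristic `p ≥ 3`; since `g ≠ 1` lies in the kernel, its
exponent is exactly `p`.
-/

open Matrix Sum

local notation "Mat₂" m:max R:max => Matrix (Fin (m+1) ⊕ Fin (m+1)) (Fin (m+1) ⊕ Fin (m+1)) R

theorem Matrix.pow_eq_zero_of_strictly_graded {ι R : Type*} [Fintype ι] [DecidableEq ι]
    [Semiring R] (N : Matrix ι ι R) (f : ι → ℕ) {k : ℕ} (hf : ∀ i, f i < k)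
    (hN : ∀ i j, f j ≤ f i → N i j = 0) : N ^ k = 0 := by
  have key : ∀ n i j, f j < f i + n → (N ^ n) i j = 0 := by
    intro n
    induction n with
    | zero => exact fun i j h => one_apply_ne (by rintro rfl; omega)
    | succ n ih =>
      intro i j h
      rw [pow_succ, mul_apply]
      refine Finset.sum_eq_zero fun z _ => ?_
      by_cases hz : f j ≤ f z
      · rw [hN z j hz, mul_zero]
      · rw [ih i z (by omega), zero_mul]
  ext i j
  exact key k i j (by have := hf j; omega)

lemma pow_char_eq_one_of_sub_one_pow_eq_zero {R : Type*} [Ring R] (p : ℕ) [Fact p.Prime]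
    [CharP R p] {x : R} {k : ℕ} (hk : k ≤ p) (hx : (x - 1) ^ k = 0) : x ^ p = 1 := by
  have := sub_pow_char_of_commute (p := p) (Commute.one_right x)
  rw [pow_eq_zero_of_le hk hx, one_pow] at this
  exact sub_eq_zero.mp this.symm

lemma commute_one_add_smul_iff {K A : Type*} [Field K] [Ring A] [Algebra K A] {c : K}
    (hc : c ≠ 0) {a b : A} : Commute (1 + c • a) b ↔ Commute a b := by
  refine ⟨fun h => ?_, fun h => (Commute.one_left b).add_left (h.smul_left c)⟩
  simpa [hc] using (h.sub_left (Commute.one_left b)).smul_left c⁻¹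

lemma Monoid.exponent_eq_prime_of_pow_eq_one {G : Type*} [Monoid G] {p : ℕ} (hp : p.Prime)
    (hpow : ∀ x : G, x ^ p = 1) {x : G} (hx : x ≠ 1) : Monoid.exponent G = p := by
  have : Nontrivial G := ⟨⟨x, 1, hx⟩⟩
  have : Fact p.Prime := ⟨hp⟩
  exact (Monoid.exponent_eq_prime_iff hp).mpr fun y hy => orderOf_eq_prime (hpow y) hy

lemma Matrix.J_apply_comm {l R : Type*} [DecidableEq l] [CommRing R] (x y : l ⊕ l) :
    J l R x y = -J l R y x := by
  rw [← neg_apply, ← J_transpose, transpose_apply]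

section SymplecticForm

variable {l R : Type*} [Fintype l] [CommRing R]

def symplecticForm (u v : l ⊕ l → R) : R :=
  ∑ i, (u (inr i) * v (inl i) - u (inl i) * v (inr i))

lemma symplecticForm_comm (u v : l ⊕ l → R) : symplecticForm u v = -symplecticForm v u := by
  simp only [symplecticForm, ← Finset.sum_neg_distrib]
  exact Finset.sum_congr rfl fun i _ => by ring

variable [DecidableEq l]

lemma mul_J_mul_transpose_apply (M : Matrix (l ⊕ l) (l ⊕ l) R) (x y : l ⊕ l) :
    (M * J l R * Mᵀ) x y = symplecticForm (M x) (M y) := by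
  simp [symplecticForm, J, mul_apply, Fintype.sum_sum_type, fromBlocks, one_apply,
    sub_eq_add_neg, Finset.sum_add_distrib]

lemma mem_symplecticGroup_iff_symplecticForm {M : Matrix (l ⊕ l) (l ⊕ l) R} :
    M ∈ symplecticGroup l R ↔ ∀ x y, symplecticForm (M x) (M y) = J l R x y := by
  simp only [SymplecticGroup.mem_iff, ← Matrix.ext_iff, mul_J_mul_transpose_apply]

lemma symplecticForm_single_single (x y : l ⊕ l) (a b : R) :
    symplecticForm (Pi.single x a) (Pi.single y b) = a * b * J l R x y := by
  rcases x with i | i <;> rcases y with j | j <;>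
    simp [symplecticForm, J, Pi.single_apply, one_apply, eq_comm]

lemma symplecticForm_single_inl (u : l ⊕ l → R) (i : l) (c : R) :
    symplecticForm u (Pi.single (inl i) c) = u (inr i) * c := by
  simp [symplecticForm, Pi.single_apply]

lemma symplecticForm_single_inr (u : l ⊕ l → R) (i : l) (c : R) :
    symplecticForm u (Pi.single (inr i) c) = -(u (inl i) * c) := by
  simp [symplecticForm, Pi.single_apply]

end SymplecticForm

namespace SymplecticCorner

section Embed

variable {m : ℕ} {R : Type*} [CommRing R]

def embed (m : ℕ) : Fin m ⊕ Fin m → Fin (m + 1) ⊕ Fin (m + 1) :=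
  Sum.map Fin.castSucc Fin.castSucc

lemma embed_injective : Function.Injective (embed m) :=
  Sum.map_injective.mpr ⟨Fin.castSucc_injective m, Fin.castSucc_injective m⟩

lemma notMem_range_embed_iff {x : Fin (m + 1) ⊕ Fin (m + 1)} :
    x ∉ Set.range (embed m) ↔ x = inl (Fin.last m) ∨ x = inr (Fin.last m) := by
  rcases x with i | i <;> cases i using Fin.lastCases <;>
    simp [embed, Fin.ext_iff, Fin.is_lt, Nat.ne_of_lt]

lemma inl_last_notMem_range : inl (Fin.last m) ∉ Set.range (embed m) :=
  notMem_range_embed_iff.mpr (Or.inl rfl)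

lemma inr_last_notMem_range : inr (Fin.last m) ∉ Set.range (embed m) :=
  notMem_range_embed_iff.mpr (Or.inr rfl)

lemma embed_ne_inl_last (a : Fin m ⊕ Fin m) : embed m a ≠ inl (Fin.last m) :=
  fun h => notMem_range_embed_iff.mpr (Or.inl h) ⟨a, rfl⟩

lemma embed_ne_inr_last (a : Fin m ⊕ Fin m) : embed m a ≠ inr (Fin.last m) :=
  fun h => notMem_range_embed_iff.mpr (Or.inr h) ⟨a, rfl⟩

lemma sum_eq_sum_embed_add {M : Type*} [AddCommMonoid M] (f : Fin (m + 1) ⊕ Fin (m + 1) → M) :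
    ∑ x, f x = ∑ a, f (embed m a) + f (inl (Fin.last m)) + f (inr (Fin.last m)) := by
  simp only [Fintype.sum_sum_type, Fin.sum_univ_castSucc, embed, Sum.map_inl, Sum.map_inr]
  abel

lemma symplecticForm_eq_embed_add (u v : Fin (m + 1) ⊕ Fin (m + 1) → R) :
    symplecticForm u v = symplecticForm (u ∘ embed m) (v ∘ embed m) +
      (u (inr (Fin.last m)) * v (inl (Fin.last m)) -
        u (inl (Fin.last m)) * v (inr (Fin.last m))) :=
  Fin.sum_univ_castSucc _

lemma J_embed_embed (a b : Fin m ⊕ Fin m) :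
    J (Fin (m + 1)) R (embed m a) (embed m b) = J (Fin m) R a b := by
  rcases a with a | a <;> rcases b with b | b <;> simp [embed, J, one_apply]

lemma J_embed_of_notMem_range (a : Fin m ⊕ Fin m) {y : Fin (m + 1) ⊕ Fin (m + 1)}
    (hy : y ∉ Set.range (embed m)) : J (Fin (m + 1)) R (embed m a) y = 0 := by
  rcases notMem_range_embed_iff.mp hy with rfl | rfl <;> rcases a with a | a <;>
    simp [embed, J, one_apply, Fin.castSucc_ne_last]

end Embed

section CornerE

variable {m : ℕ} {R : Type*} [CommRing R]

def cornerE (m : ℕ) (R : Type*) [CommRing R] : Mat₂ m R :=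
  single (inl (Fin.last m)) (inr (Fin.last m)) 1

lemma commute_cornerE_iff {M : Mat₂ m R} :
    Commute (cornerE m R) M ↔ (∀ x ≠ inl (Fin.last m), M x (inl (Fin.last m)) = 0) ∧
      (∀ y ≠ inr (Fin.last m), M (inr (Fin.last m)) y = 0) ∧
      M (inl (Fin.last m)) (inl (Fin.last m)) = M (inr (Fin.last m)) (inr (Fin.last m)) := by
  refine ⟨fun h => ⟨fun x hx => col_eq_zero_of_commute_single h hx,
    fun y hy => row_eq_zero_of_commute_single h hy, diag_eq_of_commute_single h⟩, ?_⟩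
  rintro ⟨hcol, hrow, hdiag⟩
  change cornerE m R * M = M * cornerE m R
  ext x y
  simp only [cornerE]
  by_cases hx : x = inl (Fin.last m) <;> by_cases hy : y = inr (Fin.last m)
  · subst hx hy
    rw [single_mul_apply_same, mul_single_apply_same, one_mul, mul_one, hdiag]
  · subst hx
    rw [single_mul_apply_same, mul_single_apply_of_ne (hbj := hy), one_mul, hrow y hy]
  · subst hy
    rw [single_mul_apply_of_ne (h := hx), mul_single_apply_same, hcol x hx, mul_one]
  · rw [single_mul_apply_of_ne (h := hx), mul_single_apply_of_ne (hbj := hy)]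

variable {M M' : Mat₂ m R}

lemma submatrix_embed_mul (hM : Commute (cornerE m R) M) (hM' : Commute (cornerE m R) M') :
    (M * M').submatrix (embed m) (embed m) =
      M.submatrix (embed m) (embed m) * M'.submatrix (embed m) (embed m) := by
  obtain ⟨hcol, -, -⟩ := commute_cornerE_iff.mp hM
  obtain ⟨-, hrow', -⟩ := commute_cornerE_iff.mp hM'
  ext a b
  simp only [submatrix_apply, mul_apply]
  rw [sum_eq_sum_embed_add, hcol _ (embed_ne_inl_last a), hrow' _ (embed_ne_inr_last b),
    zero_mul, mul_zero, add_zero, add_zero]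

lemma corner_mul (hM' : Commute (cornerE m R) M') :
    (M * M') (inl (Fin.last m)) (inl (Fin.last m)) =
      M (inl (Fin.last m)) (inl (Fin.last m)) * M' (inl (Fin.last m)) (inl (Fin.last m)) := by
  obtain ⟨hcol', -, -⟩ := commute_cornerE_iff.mp hM'
  rw [mul_apply, Fintype.sum_eq_single _ fun z hz => by rw [hcol' z hz, mul_zero]]

lemma corner_mul_self_of_mem (hM : M ∈ symplecticGroup (Fin (m + 1)) R)
    (hE : Commute (cornerE m R) M) :
    M (inl (Fin.last m)) (inl (Fin.last m)) * M (inl (Fin.last m)) (inl (Fin.last m)) = 1 := by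
  obtain ⟨-, hrow, hdiag⟩ := commute_cornerE_iff.mp hE
  have hrow_last : M (inr (Fin.last m)) =
      Pi.single (inr (Fin.last m)) (M (inl (Fin.last m)) (inl (Fin.last m))) := by
    ext y
    by_cases hy : y = inr (Fin.last m)
    · subst hy
      simp [hdiag]
    · rw [hrow y hy, Pi.single_eq_of_ne hy]
  have := mem_symplecticGroup_iff_symplecticForm.mp hM (inl (Fin.last m)) (inr (Fin.last m))
  rw [hrow_last, symplecticForm_single_inr] at this
  simpa [J, hdiag] using this

lemma submatrix_embed_mem (hM : M ∈ symplecticGroup (Fin (m + 1)) R)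
    (hE : Commute (cornerE m R) M) :
    M.submatrix (embed m) (embed m) ∈ symplecticGroup (Fin m) R := by
  obtain ⟨hcol, -, -⟩ := commute_cornerE_iff.mp hE
  refine mem_symplecticGroup_iff_symplecticForm.mpr fun a b => ?_
  have := mem_symplecticGroup_iff_symplecticForm.mp hM (embed m a) (embed m b)
  rwa [symplecticForm_eq_embed_add, hcol _ (embed_ne_inl_last a), hcol _ (embed_ne_inl_last b),
    mul_zero, zero_mul, sub_zero, add_zero, J_embed_embed] at this

lemma sub_one_pow_three_eq_zero (hE : Commute (cornerE m R) M)
    (hsub : M.submatrix (embed m) (embed m) = 1)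
    (hcorner : M (inl (Fin.last m)) (inl (Fin.last m)) = 1) : (M - 1) ^ 3 = 0 := by
  obtain ⟨hcol, hrow, hdiag⟩ := commute_cornerE_iff.mp hE
  refine pow_eq_zero_of_strictly_graded _
    (fun x => if x = inl (Fin.last m) then 0 else if x = inr (Fin.last m) then 2 else 1)
    (fun x => by split_ifs <;> omega) fun x y hxy => ?_
  rw [Matrix.sub_apply, sub_eq_zero]
  by_cases hy₁ : y = inl (Fin.last m)
  · subst hy₁
    by_cases hx : x = inl (Fin.last m)
    · rw [hx, hcorner, one_apply_eq]
    · rw [hcol x hx, one_apply_ne hx]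
  by_cases hx₂ : x = inr (Fin.last m)
  · subst hx₂
    by_cases hy : y = inr (Fin.last m)
    · rw [hy, ← hdiag, hcorner, one_apply_eq]
    · rw [hrow y hy, one_apply_ne (Ne.symm hy)]
  have hx₁ : x ≠ inl (Fin.last m) := by
    rintro rfl
    split_ifs at hxy <;> first | omega | contradiction
  have hy₂ : y ≠ inr (Fin.last m) := by
    rintro rfl
    split_ifs at hxy <;> first | omega | contradiction
  obtain ⟨a, rfl⟩ : x ∈ Set.range (embed m) :=
    not_not.mp fun h => (notMem_range_embed_iff.mp h).elim hx₁ hx₂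
  obtain ⟨b, rfl⟩ : y ∈ Set.range (embed m) :=
    not_not.mp fun h => (notMem_range_embed_iff.mp h).elim hy₁ hy₂
  rw [← submatrix_apply M, hsub, ← submatrix_one (α := R) _ embed_injective, submatrix_apply]

end CornerE

section ExtendCorner

variable {m : ℕ} {R : Type*} [CommRing R]

/-- `diag(B, ε, ε)`: the rows `embed m a` are the rows of `B` padded by zeros, the two remaining
rows are `ε` times unit vectors. -/
noncomputable def extendCorner (B : Matrix (Fin m ⊕ Fin m) (Fin m ⊕ Fin m) R) (ε : R) :
    Mat₂ m R :=
  Function.extend (embed m) (fun a => Function.extend (embed m) (B a) 0) fun x => Pi.single x ε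

variable {B : Matrix (Fin m ⊕ Fin m) (Fin m ⊕ Fin m) R} {ε : R}

lemma extendCorner_embed (a : Fin m ⊕ Fin m) :
    extendCorner B ε (embed m a) = Function.extend (embed m) (B a) 0 :=
  embed_injective.extend_apply _ _ a

lemma extendCorner_of_notMem {x : Fin (m + 1) ⊕ Fin (m + 1)} (hx : x ∉ Set.range (embed m)) :
    extendCorner B ε x = Pi.single x ε :=
  Function.extend_apply' _ _ _ hx

lemma extend_embed_of_notMem (u : Fin m ⊕ Fin m → R) {y : Fin (m + 1) ⊕ Fin (m + 1)}
    (hy : y ∉ Set.range (embed m)) : Function.extend (embed m) u 0 y = 0 :=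
  Function.extend_apply' _ _ _ hy

lemma submatrix_extendCorner : (extendCorner B ε).submatrix (embed m) (embed m) = B := by
  ext a b
  simp [extendCorner_embed, embed_injective.extend_apply]

lemma extendCorner_inl_last : extendCorner B ε (inl (Fin.last m)) (inl (Fin.last m)) = ε := by
  simp [extendCorner_of_notMem inl_last_notMem_range]

lemma commute_cornerE_extendCorner : Commute (cornerE m R) (extendCorner B ε) := by
  refine commute_cornerE_iff.mpr ⟨fun x hx => ?_, fun y hy => ?_, ?_⟩
  · by_cases hxr : x ∈ Set.range (embed m)
    · obtain ⟨a, rfl⟩ := hxr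
      rw [extendCorner_embed, extend_embed_of_notMem _ inl_last_notMem_range]
    · rw [extendCorner_of_notMem hxr, Pi.single_eq_of_ne' hx]
  · rw [extendCorner_of_notMem inr_last_notMem_range, Pi.single_eq_of_ne hy]
  · simp [extendCorner_of_notMem inl_last_notMem_range,
      extendCorner_of_notMem inr_last_notMem_range]

lemma symplecticForm_extend_extend (u v : Fin m ⊕ Fin m → R) :
    symplecticForm (Function.extend (embed m) u 0) (Function.extend (embed m) v 0) =
      symplecticForm u v := by
  rw [symplecticForm_eq_embed_add, Function.extend_comp embed_injective,
    Function.extend_comp embed_injective, extend_embed_of_notMem _ inl_last_notMem_range,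
    extend_embed_of_notMem _ inl_last_notMem_range]
  ring

lemma symplecticForm_extend_single (u : Fin m ⊕ Fin m → R) {y : Fin (m + 1) ⊕ Fin (m + 1)}
    (hy : y ∉ Set.range (embed m)) (c : R) :
    symplecticForm (Function.extend (embed m) u 0) (Pi.single y c) = 0 := by
  rcases notMem_range_embed_iff.mp hy with rfl | rfl
  · rw [symplecticForm_single_inl, extend_embed_of_notMem _ inr_last_notMem_range, zero_mul]
  · rw [symplecticForm_single_inr, extend_embed_of_notMem _ inl_last_notMem_range, zero_mul,
      neg_zero]

lemma extendCorner_mem (hB : B ∈ symplecticGroup (Fin m) R) (hε : ε * ε = 1) :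
    extendCorner B ε ∈ symplecticGroup (Fin (m + 1)) R := by
  refine mem_symplecticGroup_iff_symplecticForm.mpr fun x y => ?_
  by_cases hx : x ∈ Set.range (embed m) <;> by_cases hy : y ∈ Set.range (embed m)
  · obtain ⟨a, rfl⟩ := hx
    obtain ⟨b, rfl⟩ := hy
    rw [extendCorner_embed, extendCorner_embed, symplecticForm_extend_extend, J_embed_embed,
      mem_symplecticGroup_iff_symplecticForm.mp hB]
  · obtain ⟨a, rfl⟩ := hx
    rw [extendCorner_embed, extendCorner_of_notMem hy, symplecticForm_extend_single _ hy,
      J_embed_of_notMem_range a hy]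
  · obtain ⟨b, rfl⟩ := hy
    rw [extendCorner_embed, extendCorner_of_notMem hx, symplecticForm_comm,
      symplecticForm_extend_single _ hx, J_apply_comm, J_embed_of_notMem_range b hx]
  · rw [extendCorner_of_notMem hx, extendCorner_of_notMem hy, symplecticForm_single_single, hε,
      one_mul]

end ExtendCorner

section Centralizer

variable {m : ℕ} {F : Type*} [Field F]

def cornerCentralizer (m : ℕ) (F : Type*) [Field F] :
    Subgroup (symplecticGroup (Fin (m + 1)) F) where
  carrier := {A | Commute (cornerE m F) A}
  mul_mem' := Commute.mul_right
  one_mem' := Commute.one_right _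
  inv_mem' {A} (hA : Commute _ _) := by
    let u : (Mat₂ m F)ˣ :=
      ⟨A, ↑A⁻¹, congrArg Subtype.val (mul_inv_cancel A),
        congrArg Subtype.val (inv_mul_cancel A)⟩
    exact hA.units_inv_right (u := u)

lemma mem_cornerCentralizer {A : symplecticGroup (Fin (m + 1)) F} :
    A ∈ cornerCentralizer m F ↔ Commute (cornerE m F) A := Iff.rfl

lemma centralizer_eq_cornerCentralizer {c : F} (hc : c ≠ 0)
    {g : symplecticGroup (Fin (m + 1)) F} (hg : (g : Mat₂ m F) = 1 + c • cornerE m F) :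
    Subgroup.centralizer {g} = cornerCentralizer m F := by
  ext A
  rw [Subgroup.mem_centralizer_singleton_iff, mem_cornerCentralizer,
    ← commute_one_add_smul_iff hc, ← hg, Subtype.ext_iff, eq_comm]
  rfl

open Classical in
/-- Meant for `x = ±1`; every other `x` is also sent to `-1`. -/
noncomputable def signOf (x : F) : ℤˣ := if x = 1 then 1 else -1

lemma signOf_eq_one_iff {x : F} : signOf x = 1 ↔ x = 1 := by
  unfold signOf
  split_ifs with h <;> simp [h]

lemma signOf_mul {x y : F} (hx : x * x = 1) (hy : y * y = 1) :
    signOf (x * y) = signOf x * signOf y := by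
  rcases mul_self_eq_one_iff.mp hx with rfl | rfl <;>
    rcases mul_self_eq_one_iff.mp hy with rfl | rfl <;>
    by_cases h : (-1 : F) = 1 <;> simp [signOf, h]

noncomputable def cornerHom (m : ℕ) (F : Type*) [Field F] :
    cornerCentralizer m F →* symplecticGroup (Fin m) F × ℤˣ where
  toFun A := (⟨(A.1 : Mat₂ m F).submatrix (embed m) (embed m),
      submatrix_embed_mem A.1.2 (mem_cornerCentralizer.mp A.2)⟩,
    signOf ((A.1 : Mat₂ m F) (inl (Fin.last m)) (inl (Fin.last m))))
  map_one' := Prod.ext (Subtype.ext (submatrix_one _ embed_injective)) (by simp [signOf])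
  map_mul' A B := by
    have hA := mem_cornerCentralizer.mp A.2
    have hB := mem_cornerCentralizer.mp B.2
    refine Prod.ext (Subtype.ext (submatrix_embed_mul hA hB)) ?_
    exact (congrArg signOf (corner_mul hB)).trans
      (signOf_mul (corner_mul_self_of_mem A.1.2 hA) (corner_mul_self_of_mem B.1.2 hB))

@[simp]
lemma coe_cornerHom_fst (A : cornerCentralizer m F) :
    ((cornerHom m F A).1 : Matrix (Fin m ⊕ Fin m) (Fin m ⊕ Fin m) F) =
      (A.1 : Mat₂ m F).submatrix (embed m) (embed m) := rfl

@[simp]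
lemma cornerHom_snd (A : cornerCentralizer m F) :
    (cornerHom m F A).2 = signOf ((A.1 : Mat₂ m F) (inl (Fin.last m)) (inl (Fin.last m))) :=
  rfl

lemma cornerHom_surjective (h : (-1 : F) ≠ 1) : Function.Surjective (cornerHom m F) := by
  rintro ⟨B, u⟩
  have hε : ((u : ℤ) : F) * (u : ℤ) = 1 := by
    rw [← Int.cast_mul, ← Units.val_mul, Int.units_mul_self, Units.val_one, Int.cast_one]
  refine ⟨⟨⟨extendCorner B ((u : ℤ) : F), extendCorner_mem B.2 hε⟩,
    commute_cornerE_extendCorner⟩, Prod.ext (Subtype.ext submatrix_extendCorner) ?_⟩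
  rw [cornerHom_snd]
  change signOf (extendCorner _ _ _ _) = u
  rw [extendCorner_inl_last]
  rcases Int.units_eq_one_or u with rfl | rfl <;> simp [signOf, h]

lemma mem_ker_cornerHom_iff {A : cornerCentralizer m F} :
    A ∈ (cornerHom m F).ker ↔ (A.1 : Mat₂ m F).submatrix (embed m) (embed m) = 1 ∧
      (A.1 : Mat₂ m F) (inl (Fin.last m)) (inl (Fin.last m)) = 1 := by
  rw [MonoidHom.mem_ker, Prod.ext_iff, Subtype.ext_iff, coe_cornerHom_fst, cornerHom_snd,
    Prod.fst_one, Prod.snd_one, OneMemClass.coe_one, signOf_eq_one_iff]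

lemma pow_char_eq_one_of_mem_ker (p : ℕ) [Fact p.Prime] [CharP F p] (hp : 3 ≤ p)
    {A : cornerCentralizer m F} (hA : A ∈ (cornerHom m F).ker) : A ^ p = 1 := by
  obtain ⟨hsub, hcorner⟩ := mem_ker_cornerHom_iff.mp hA
  refine Subtype.ext (Subtype.ext ?_)
  simpa using pow_char_eq_one_of_sub_one_pow_eq_zero p hp
    (sub_one_pow_three_eq_zero (mem_cornerCentralizer.mp A.2) hsub hcorner)

lemma one_add_smul_cornerE_mem_ker {c : F} {g : cornerCentralizer m F}
    (hg : (g.1 : Mat₂ m F) = 1 + c • cornerE m F) : g ∈ (cornerHom m F).ker := by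
  refine mem_ker_cornerHom_iff.mpr ⟨?_, by simp [hg, cornerE]⟩
  ext a b
  simp [hg, cornerE, single_apply_of_row_ne (embed_ne_inl_last a).symm, one_apply,
    embed_injective.eq_iff]

theorem exists_centralizer_hom (p : ℕ) [Fact p.Prime] [CharP F p] (hp : 3 ≤ p) {c : F}
    (hc : c ≠ 0) (g : symplecticGroup (Fin (m + 1)) F)
    (hg : (g : Mat₂ m F) = 1 + c • cornerE m F) :
    ∃ π : Subgroup.centralizer {g} →* symplecticGroup (Fin m) F × ℤˣ,
      Function.Surjective π ∧ Monoid.exponent π.ker = p ∧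
        ∃ hgc : g ∈ Subgroup.centralizer {g},
          (⟨g, hgc⟩ : Subgroup.centralizer {g}) ∈ π.ker := by
  have : Fact (2 < p) := ⟨hp⟩
  have hgC : g ∈ cornerCentralizer m F :=
    (commute_one_add_smul_iff hc).mp (hg ▸ Commute.refl (g : Mat₂ m F))
  have hg_ker := one_add_smul_cornerE_mem_ker (g := ⟨g, hgC⟩) hg
  have hg_ne : (⟨⟨g, hgC⟩, hg_ker⟩ : (cornerHom m F).ker) ≠ 1 := fun h => by
    have := congrFun (congrFun hg (inl (Fin.last m))) (inr (Fin.last m))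
    simp_all [cornerE]
  rw [centralizer_eq_cornerCentralizer hc hg]
  refine ⟨cornerHom m F, cornerHom_surjective (CharP.neg_one_ne_one F p), ?_, hgC, hg_ker⟩
  exact Monoid.exponent_eq_prime_of_pow_eq_one Fact.out
    (fun A => Subtype.ext (pow_char_eq_one_of_mem_ker p hp A.2)) hg_ne

theorem exists_centralizer_hom_of_eq_succ (p : ℕ) [Fact p.Prime] [CharP F p] (hp : 3 ≤ p)
    {n : ℕ} (hnm : n = m + 1) {c : F} (hc : c ≠ 0) (k : Fin n) (hk : (k : ℕ) = m)
    (g : symplecticGroup (Fin n) F)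
    (hg : (g : Matrix (Fin n ⊕ Fin n) (Fin n ⊕ Fin n) F) = 1 + c • single (inl k) (inr k) 1) :
    ∃ π : Subgroup.centralizer {g} →* symplecticGroup (Fin m) F × ℤˣ,
      Function.Surjective π ∧ Monoid.exponent π.ker = p ∧
        ∃ hgc : g ∈ Subgroup.centralizer {g},
          (⟨g, hgc⟩ : Subgroup.centralizer {g}) ∈ π.ker := by
  subst hnm
  obtain rfl : k = Fin.last m := Fin.ext hk
  exact exists_centralizer_hom p hp hc g hg

end Centralizer

end SymplecticCorner

/-- Let `2n = p^j + 1`, `G = Sp_{2n}(q)`, and `g = I + (-1)^{j(p-1)/2} E_{n,2n}`.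
Then `C_G(g)` admits a surjective group homomorphism onto
`Sp_{p^j-1}(q) × {±1}` whose kernel has exponent `p` and contains `g`. -/
theorem stmt_16 (p e j : ℕ) (hp : p.Prime) (hodd : Odd p)
    (F : Type*) [Field F] [Fintype F] (hF : Fintype.card F = p ^ e)
    (g : Matrix.symplecticGroup (Fin ((p ^ j + 1) / 2)) F)
    (hg : g.val =
      1 + ((-1 : F) ^ (j * ((p - 1) / 2))) •
        Matrix.single
          (Sum.inl ⟨(p ^ j + 1) / 2 - 1, by have := Nat.one_le_pow j p hp.pos; omega⟩)
          (Sum.inr ⟨(p ^ j + 1) / 2 - 1, by have := Nat.one_le_pow j p hp.pos; omega⟩)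
          (1 : F)) :
    ∃ π : Subgroup.centralizer {g} →*
        (Matrix.symplecticGroup (Fin ((p ^ j - 1) / 2)) F) × ℤˣ,
      Function.Surjective π ∧ Monoid.exponent π.ker = p ∧
        ∃ hgc : g ∈ Subgroup.centralizer {g},
          (⟨g, hgc⟩ : Subgroup.centralizer {g}) ∈ π.ker := by
  have : Fact p.Prime := ⟨hp⟩
  have : CharP F p := charP_of_card_eq_prime_pow hF
  have hp3 : 3 ≤ p := by
    obtain ⟨k, rfl⟩ := hodd
    have := hp.two_le
    omega
  obtain ⟨s, hs⟩ := hodd.pow (n := j)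
  exact SymplecticCorner.exists_centralizer_hom_of_eq_succ p hp3 (by omega)
    (pow_ne_zero _ (neg_ne_zero.mpr one_ne_zero)) _ (by simp; omega) g hg
end
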